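/- Fix λ ∈ ℝ and T > 0. There exist constants C > 0 and h₀ > 0, both independent of ε and h, such that for every ε ∈ ℝ and every integer N ≥ 1 with h = T/N ≤ h₀, the function φ(y) = cos(X̄(N;y)) satisfies |E[cos(X̄(N;ζ))] − A(2,N)φ| ≤ C ε⁴ (1 + e^{4Tλ}), where ζ = (ζ_1,…,ζ_N) are i.i.d. Rademacher variables and A(2,N) is the level-2 Smolyak sparse grid quadrature built from one-dimensional Gauss–Hermite rules. -/

import Mathlib

open MeasureTheory ProbabilityTheory Finset

noncomputable section

/-- Evaluation of the probabilists' Hermite polynomial `H_n`. -/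
def hermiteEval (n : ℕ) (y : ℝ) : ℝ := Polynomial.aeval y (Polynomial.hermite n)

/-- One-dimensional quadrature `Q_n ψ = ∑ ψ(y_{n,α}) w_{n,α}` with prescribed nodes and weights
(in particular `Q_0 = 0`). -/
def ghQuad (node weight : (n : ℕ) → Fin n → ℝ) (n : ℕ) (ψ : ℝ → ℝ) : ℝ :=
  ∑ α : Fin n, ψ (node n α) * weight n α

/-- `node`/`weight` are the Gauss–Hermite nodes (the increasing enumeration of the `n` roots of
the probabilists' Hermite polynomial `H_n`) together with the Gauss–Hermite weights
`w_{n,α} = n! / (n² H_{n-1}(y_{n,α})²)`. -/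
def IsGaussHermite (node weight : (n : ℕ) → Fin n → ℝ) : Prop :=
  (∀ n : ℕ, StrictMono (node n)) ∧
  (∀ (n : ℕ) (α : Fin n), hermiteEval n (node n α) = 0) ∧
  (∀ (n : ℕ) (α : Fin n),
    weight n α = (Nat.factorial n : ℝ) / ((n : ℝ) ^ 2 * hermiteEval (n - 1) (node n α) ^ 2))

/-- Standard Gaussian integral `I₁ ψ = (2π)^{-1/2} ∫ ψ(y) e^{-y²/2} dy`. -/
def gaussInt (ψ : ℝ → ℝ) : ℝ := ∫ y, ψ y ∂(gaussianReal 0 1)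

/-- `N`-dimensional standard Gaussian integral `I_N φ`. -/
def gaussIntN (N : ℕ) (φ : (Fin N → ℝ) → ℝ) : ℝ :=
  ∫ y, φ y ∂(MeasureTheory.Measure.pi fun _ : Fin N => gaussianReal 0 1)

/-- Apply a one-dimensional functional `T` in the `k`-th coordinate of a function of `N`
variables. -/
def applyCoord {N : ℕ} (T : (ℝ → ℝ) → ℝ) (k : Fin N) (φ : (Fin N → ℝ) → ℝ) :
    (Fin N → ℝ) → ℝ :=
  fun y => T fun t => φ (Function.update y k t)

/-- Tensor product `T_1 ⊗ ⋯ ⊗ T_N` of one-dimensional functionals, applied to `φ`. -/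
def tensorApply {N : ℕ} (T : Fin N → ((ℝ → ℝ) → ℝ)) (φ : (Fin N → ℝ) → ℝ) : ℝ :=
  ((List.finRange N).foldr (fun k ψ => applyCoord (T k) k ψ) φ) fun _ => 0

/-- The level-`L` Smolyak sparse grid quadrature
`A(L,d)φ = ∑_{d ≤ |i| ≤ L+d-1} (Q_{i_1}-Q_{i_1-1}) ⊗ ⋯ ⊗ (Q_{i_d}-Q_{i_d-1}) φ`
(each `i_k ≥ 1`; note that the constraints force `i_k ≤ L`, so summing over
`i : Fin d → Fin (L+2)` loses no terms). -/
def smolyak (node weight : (n : ℕ) → Fin n → ℝ) (L d : ℕ) (φ : (Fin d → ℝ) → ℝ) : ℝ :=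
  ∑ i : Fin d → Fin (L + 2),
    if (∀ k, 1 ≤ (i k : ℕ)) ∧ d ≤ (∑ k, (i k : ℕ)) ∧ (∑ k, (i k : ℕ)) ≤ L + d - 1 then
      tensorApply
        (fun k ψ => ghQuad node weight (i k : ℕ) ψ - ghQuad node weight ((i k : ℕ) - 1) ψ) φ
    else 0

/-- The Peano kernel `Γ_{y,γ}(z) = (z-y)^{γ-1}/(γ-1)!` for `z ≥ y`, `0` otherwise. -/
def peanoKernel (y : ℝ) (γ : ℕ) : ℝ → ℝ :=
  fun z => if y ≤ z then (z - y) ^ (γ - 1) / (Nat.factorial (γ - 1) : ℝ) else 0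

/-- The Gauss–Hermite quadrature error on the Peano kernel, `R_{n,γ}(Γ_{y,γ})`. -/
def ghErr (node weight : (n : ℕ) → Fin n → ℝ) (n γ : ℕ) (y : ℝ) : ℝ :=
  ghQuad node weight n (peanoKernel y γ) - gaussInt (peanoKernel y γ)

/-- Euler scheme `X̄(N;y) = (1+λh)^N + ∑_{j=1}^N (1+λh)^{N-j} ε √h y_j` for
`dX = λX dt + ε dw`, `X(0) = 1`. -/
def eulerX (lam eps h : ℝ) (N : ℕ) (y : Fin N → ℝ) : ℝ :=
  (1 + lam * h) ^ N +
    ∑ j : Fin N, (1 + lam * h) ^ (N - ((j : ℕ) + 1)) * eps * Real.sqrt h * y j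

/-- Expectation over `d` i.i.d. Rademacher variables: `E g(ζ) = 2^{-d} ∑_{s ∈ {-1,1}^d} g(s)`. -/
def radExp (d : ℕ) (g : (Fin d → ℝ) → ℝ) : ℝ :=
  (1 / 2 ^ d) * ∑ s : Fin d → Bool, g fun k => if s k then 1 else -1

/-- Expectation over `d` i.i.d. variables with `P(ζ = ±√3) = 1/6`, `P(ζ = 0) = 2/3`. -/
def threePointExp (d : ℕ) (g : (Fin d → ℝ) → ℝ) : ℝ :=
  ∑ s : Fin d → Fin 3,
    (∏ k, ![(1 : ℝ) / 6, 2 / 3, 1 / 6] (s k)) *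
      g fun k => ![Real.sqrt 3, 0, -Real.sqrt 3] (s k)

/-- Partial derivative in the `k`-th coordinate. -/
def pderivCoord {d : ℕ} (k : Fin d) (φ : (Fin d → ℝ) → ℝ) : (Fin d → ℝ) → ℝ :=
  fun y => deriv (fun t => φ (Function.update y k t)) (y k)

/-- Mixed partial derivative `D^α` for a multi-index `α`. -/
def mderiv {d : ℕ} (α : Fin d → ℕ) (φ : (Fin d → ℝ) → ℝ) : (Fin d → ℝ) → ℝ :=
  (List.finRange d).foldr (fun k ψ => (pderivCoord k)^[α k] ψ) φ

end

/-!
At level 2 the only admissible multi-indices are `(1,…,1)` and `(1,…,2,…,1)`. Since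
`Q₁ψ = ψ(0)` and `Q₂ψ = (ψ(1) + ψ(-1))/2`, the Smolyak rule applied to `cos (a + ∑ bⱼ yⱼ)` is
`cos a · (1 + ∑ₖ (cos bₖ - 1))`, while the Rademacher expectation is `cos a · ∏ₖ cos bₖ`.
With `uₖ = cos bₖ - 1`, their difference is `cos a` times the second-order remainder of
`∏ₖ (1 + uₖ)`, which is at most `(∑ₖ |uₖ|)² ≤ (∑ₖ bₖ²/2)²`. For the Euler scheme
`bₖ² ≤ ε² h (1 + e^{2Tλ})` as soon as `1 + λh ≥ 0` (ensured by `h ≤ 1/(1 + |λ|)`), so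
`∑ₖ bₖ² ≤ ε² T (1 + e^{2Tλ})`; finally `(1 + e^{2Tλ})² ≤ 2 (1 + e^{4Tλ})`.
-/

open Finset

lemma hermiteEval_zero (x : ℝ) : hermiteEval 0 x = 1 := by
  simp [hermiteEval, Polynomial.hermite_zero]

lemma hermiteEval_one (x : ℝ) : hermiteEval 1 x = x := by
  simp [hermiteEval]

lemma hermiteEval_two (x : ℝ) : hermiteEval 2 x = x ^ 2 - 1 := by
  simp [hermiteEval, Polynomial.hermite_succ, Polynomial.hermite_zero]
  ring

lemma ghQuad_zero (node weight : (n : ℕ) → Fin n → ℝ) (ψ : ℝ → ℝ) :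
    ghQuad node weight 0 ψ = 0 := by
  simp [ghQuad]

namespace IsGaussHermite

variable {node weight : (n : ℕ) → Fin n → ℝ} (hGH : IsGaussHermite node weight)
include hGH

lemma ghQuad_one (ψ : ℝ → ℝ) : ghQuad node weight 1 ψ = ψ 0 := by
  have hnode : node 1 0 = 0 := by simpa [hermiteEval_one] using hGH.2.1 1 0
  have hweight : weight 1 0 = 1 := by simpa [hermiteEval_zero] using hGH.2.2 1 0
  simp [ghQuad, hnode, hweight]

lemma node_two : node 2 0 = -1 ∧ node 2 1 = 1 := by
  have hroot (α : Fin 2) : (node 2 α - 1) * (node 2 α + 1) = 0 := by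
    have := hGH.2.1 2 α
    rw [hermiteEval_two] at this
    linear_combination this
  have hlt : node 2 0 < node 2 1 := hGH.1 2 Fin.zero_lt_one
  rcases mul_eq_zero.1 (hroot 0) with h0 | h0 <;>
    rcases mul_eq_zero.1 (hroot 1) with h1 | h1 <;>
    constructor <;> linarith

lemma ghQuad_two (ψ : ℝ → ℝ) : ghQuad node weight 2 ψ = (ψ 1 + ψ (-1)) / 2 := by
  obtain ⟨h0, h1⟩ := hGH.node_two
  have hw0 := hGH.2.2 2 0
  have hw1 := hGH.2.2 2 1
  rw [h0, hermiteEval_one] at hw0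
  rw [h1, hermiteEval_one] at hw1
  rw [ghQuad, Fin.sum_univ_two, h0, h1, hw0, hw1]
  norm_num [Nat.factorial]
  ring

end IsGaussHermite

section TensorApply

variable {N : ℕ} (T : Fin N → (ℝ → ℝ) → ℝ) (φ : (Fin N → ℝ) → ℝ)

lemma update_zero_eq_ite_mem (l : List (Fin N)) (k : Fin N) (y : Fin N → ℝ) :
    (fun j => if j ∈ l then 0 else Function.update y k 0 j) =
      fun j => if j ∈ k :: l then 0 else y j := by
  funext j
  by_cases hjk : j = k <;> simp [hjk]

lemma foldr_applyCoord_of_eval_zero (l : List (Fin N)) (hT : ∀ k ∈ l, ∀ ψ, T k ψ = ψ 0)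
    (y : Fin N → ℝ) :
    l.foldr (fun k ψ => applyCoord (T k) k ψ) φ y = φ fun j => if j ∈ l then 0 else y j := by
  induction l generalizing y with
  | nil => simp
  | cons k l ih =>
    rw [List.foldr_cons, applyCoord, hT k List.mem_cons_self,
      ih (fun k hk => hT k (List.mem_cons_of_mem _ hk)), update_zero_eq_ite_mem]

lemma foldr_applyCoord_of_eval_zero_of_ne (k₀ : Fin N) (l : List (Fin N)) (hl : l.Nodup)
    (hk₀ : k₀ ∈ l) (hT : ∀ k ∈ l, k ≠ k₀ → ∀ ψ, T k ψ = ψ 0) (y : Fin N → ℝ) :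
    l.foldr (fun k ψ => applyCoord (T k) k ψ) φ y =
      T k₀ fun t => φ (Function.update (fun j => if j ∈ l then 0 else y j) k₀ t) := by
  induction l generalizing y with
  | nil => simp at hk₀
  | cons k l ih =>
    obtain ⟨hkl, hl⟩ := List.nodup_cons.1 hl
    rw [List.foldr_cons, applyCoord]
    by_cases hk : k = k₀
    · subst hk
      have hT' : ∀ j ∈ l, ∀ ψ, T j ψ = ψ 0 := fun j hj =>
        hT j (List.mem_cons_of_mem _ hj) (ne_of_mem_of_not_mem hj hkl)
      congr 1
      funext t
      rw [foldr_applyCoord_of_eval_zero T φ l hT']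
      congr 1
      funext j
      by_cases hj : j = k <;> simp [hj, hkl]
    · have hk₀l : k₀ ∈ l := (List.mem_cons.1 hk₀).resolve_left (Ne.symm hk)
      rw [hT k List.mem_cons_self hk,
        ih hl hk₀l (fun j hj => hT j (List.mem_cons_of_mem _ hj)), update_zero_eq_ite_mem]

lemma tensorApply_of_eval_zero (hT : ∀ k ψ, T k ψ = ψ 0) : tensorApply T φ = φ 0 := by
  rw [tensorApply, foldr_applyCoord_of_eval_zero T φ _ fun k _ => hT k]
  simp [Pi.zero_def]

lemma tensorApply_of_eval_zero_of_ne (k₀ : Fin N) (hT : ∀ k, k ≠ k₀ → ∀ ψ, T k ψ = ψ 0) :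
    tensorApply T φ = T k₀ fun t => φ (Pi.single k₀ t) := by
  rw [tensorApply, foldr_applyCoord_of_eval_zero_of_ne T φ k₀ _ (List.nodup_finRange N)
    (List.mem_finRange k₀) fun k _ => hT k]
  simp [Pi.single, Pi.zero_def]

end TensorApply

lemma eq_zero_or_exists_eq_single_of_sum_le_one {ι : Type*} [Fintype ι] [DecidableEq ι]
    (e : ι → ℕ) (he : ∑ k, e k ≤ 1) : e = 0 ∨ ∃ k, e = Pi.single k 1 := by
  by_cases hk : ∃ k, e k ≠ 0
  · obtain ⟨k, hk⟩ := hk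
    refine Or.inr ⟨k, funext fun j => ?_⟩
    by_cases hj : j = k
    · subst hj
      have := single_le_sum (fun i _ => Nat.zero_le (e i)) (mem_univ j)
      simp only [Pi.single_eq_same]
      omega
    · have := sum_le_sum_of_subset_of_nonneg (subset_univ {j, k})
        fun i _ _ => Nat.zero_le (e i)
      rw [sum_pair hj] at this
      simp only [Pi.single_eq_of_ne hj]
      omega
  · simp only [not_exists, not_not] at hk
    exact Or.inl (funext hk)

def levelTwoIndex {N : ℕ} : Option (Fin N) → Fin N → Fin 4
  | none => fun _ => 1
  | some k₀ => fun j => if j = k₀ then 2 else 1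

lemma levelTwoIndex_injective {N : ℕ} : Function.Injective (levelTwoIndex (N := N)) := by
  rintro (_ | k) (_ | k') h
  · rfl
  · exact absurd (congrFun h k') (by simp [levelTwoIndex])
  · exact absurd (congrFun h k) (by simp [levelTwoIndex])
  · by_contra hkk
    have hne : k ≠ k' := fun hk => hkk (congrArg some hk)
    simpa [levelTwoIndex, hne] using congrFun h k

lemma smolyak_two_condition_iff {N : ℕ} (i : Fin N → Fin 4) :
    ((∀ k, 1 ≤ (i k : ℕ)) ∧ N ≤ ∑ k, (i k : ℕ) ∧ ∑ k, (i k : ℕ) ≤ 2 + N - 1) ↔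
      i ∈ Set.range levelTwoIndex := by
  constructor
  · rintro ⟨hpos, -, hsum⟩
    have hsplit : ∑ k, (i k : ℕ) = ∑ k, ((i k : ℕ) - 1) + N := by
      rw [← sum_congr rfl fun k _ => Nat.sub_add_cancel (hpos k), sum_add_distrib]
      simp
    rcases eq_zero_or_exists_eq_single_of_sum_le_one (fun k => (i k : ℕ) - 1) (by omega)
      with he | ⟨k₀, he⟩
    · refine ⟨none, funext fun j => Fin.ext ?_⟩
      have := congrFun he j
      have := hpos j
      simp only [levelTwoIndex, Pi.zero_apply] at *
      omega
    · refine ⟨some k₀, funext fun j => Fin.ext ?_⟩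
      have := congrFun he j
      have := hpos j
      by_cases hj : j = k₀ <;> simp [levelTwoIndex, hj] at * <;> omega
  · rintro ⟨o | k₀, rfl⟩
    · simp [levelTwoIndex]
    · have hsum : ∑ k, (levelTwoIndex (some k₀) k : ℕ) = N + 1 := by
        have (k : Fin N) : (levelTwoIndex (some k₀) k : ℕ) = 1 + if k = k₀ then 1 else 0 := by
          by_cases hk : k = k₀ <;> simp [levelTwoIndex, hk]
        simp [this, sum_add_distrib]
      refine ⟨fun k => ?_, by omega, by omega⟩
      by_cases hk : k = k₀ <;> simp [levelTwoIndex, hk]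

lemma IsGaussHermite.smolyak_two {node weight : (n : ℕ) → Fin n → ℝ}
    (hGH : IsGaussHermite node weight) {N : ℕ} (φ : (Fin N → ℝ) → ℝ) :
    smolyak node weight 2 N φ =
      φ 0 + ∑ k, ((φ (Pi.single k 1) + φ (Pi.single k (-1))) / 2 - φ 0) := by
  have hfilter : univ.filter (fun i : Fin N → Fin 4 =>
      (∀ k, 1 ≤ (i k : ℕ)) ∧ N ≤ ∑ k, (i k : ℕ) ∧ ∑ k, (i k : ℕ) ≤ 2 + N - 1) =
      univ.image levelTwoIndex := by
    ext i
    rw [mem_filter, smolyak_two_condition_iff]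
    simp
  have hQ₁ (ψ : ℝ → ℝ) : ghQuad node weight 1 ψ - ghQuad node weight 0 ψ = ψ 0 := by
    rw [hGH.ghQuad_one, ghQuad_zero, sub_zero]
  rw [smolyak, ← sum_filter, hfilter, sum_image fun _ _ _ _ h => levelTwoIndex_injective h,
    Fintype.sum_option]
  congr 1
  · exact tensorApply_of_eval_zero _ φ fun k => by simpa [levelTwoIndex] using hQ₁
  · refine sum_congr rfl fun k₀ _ => ?_
    rw [tensorApply_of_eval_zero_of_ne _ φ k₀ fun k hk => by simpa [levelTwoIndex, hk] using hQ₁]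
    simp [levelTwoIndex, hGH.ghQuad_two, hGH.ghQuad_one]

open Complex in
lemma sum_bool_cos_add_sum {ι : Type*} [Fintype ι] [DecidableEq ι] (a : ℝ) (b : ι → ℝ) :
    ∑ s : ι → Bool, Real.cos (a + ∑ j, b j * if s j then 1 else -1) =
      2 ^ Fintype.card ι * (Real.cos a * ∏ j, Real.cos (b j)) := by
  set σ : Bool → ℝ := fun t => if t then 1 else -1
  have hexp : ∑ s : ι → Bool, exp (↑(a + ∑ j, b j * σ (s j)) * I) =
      exp (a * I) * ↑(∏ j, 2 * Real.cos (b j)) := by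
    calc ∑ s : ι → Bool, exp (↑(a + ∑ j, b j * σ (s j)) * I)
        = ∑ s : ι → Bool, exp (a * I) * ∏ j, exp (↑(b j * σ (s j)) * I) := by
          refine sum_congr rfl fun s _ => ?_
          rw [ofReal_add, add_mul, exp_add, ofReal_sum, sum_mul, exp_sum]
      _ = exp (a * I) * ↑(∏ j, 2 * Real.cos (b j)) := by
          rw [← mul_sum, ← Fintype.prod_sum fun j t => exp (↑(b j * σ t) * I)]
          simp [σ, two_cos]
  have hre := congrArg re hexp
  rw [re_sum, re_mul_ofReal, exp_ofReal_mul_I_re, prod_mul_distrib, prod_const] at hre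
  simp only [exp_ofReal_mul_I_re] at hre
  rw [hre, card_univ]
  ring

lemma radExp_cos_add_sum {N : ℕ} (a : ℝ) (b : Fin N → ℝ) :
    radExp N (fun y => Real.cos (a + ∑ j, b j * y j)) = Real.cos a * ∏ j, Real.cos (b j) := by
  rw [radExp, sum_bool_cos_add_sum, Fintype.card_fin]
  field_simp

lemma IsGaussHermite.smolyak_two_cos_add_sum {node weight : (n : ℕ) → Fin n → ℝ}
    (hGH : IsGaussHermite node weight) {N : ℕ} (a : ℝ) (b : Fin N → ℝ) :
    smolyak node weight 2 N (fun y => Real.cos (a + ∑ j, b j * y j)) =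
      Real.cos a * (1 + ∑ k, (Real.cos (b k) - 1)) := by
  rw [hGH.smolyak_two, mul_add, mul_one, mul_sum]
  congr 1
  · simp
  · refine sum_congr rfl fun k _ => ?_
    have hline (t : ℝ) : ∑ j, b j * (Pi.single k t : Fin N → ℝ) j = b k * t := by simp [Pi.single_apply]
    simp only [hline, Pi.zero_apply, mul_zero, sum_const_zero, add_zero, mul_one, mul_neg,
      ← sub_eq_add_neg, Real.cos_add, Real.cos_sub]
    ring

section ProdOneAdd

variable {ι R : Type*} [NormedCommRing R] (s : Finset ι) (u : ι → R)

lemma norm_prod_one_add_sub_one_le (hu : ∀ k ∈ s, ‖1 + u k‖ ≤ 1) :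
    ‖∏ k ∈ s, (1 + u k) - 1‖ ≤ ∑ k ∈ s, ‖u k‖ := by
  induction s using Finset.cons_induction with
  | empty => simp
  | cons a s ha ih =>
    rw [prod_cons, sum_cons]
    have ih := ih fun k hk => hu k (mem_cons_of_mem hk)
    calc ‖(1 + u a) * ∏ k ∈ s, (1 + u k) - 1‖
        = ‖(1 + u a) * (∏ k ∈ s, (1 + u k) - 1) + u a‖ := by ring_nf
      _ ≤ ‖1 + u a‖ * ‖∏ k ∈ s, (1 + u k) - 1‖ + ‖u a‖ :=
          (norm_add_le _ _).trans (add_le_add_left (norm_mul_le _ _) _)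
      _ ≤ 1 * ∑ k ∈ s, ‖u k‖ + ‖u a‖ := by
          gcongr
          exact hu a (mem_cons_self a s)
      _ = ‖u a‖ + ∑ k ∈ s, ‖u k‖ := by ring

lemma norm_prod_one_add_sub_one_sub_sum_le (hu : ∀ k ∈ s, ‖1 + u k‖ ≤ 1) :
    ‖∏ k ∈ s, (1 + u k) - 1 - ∑ k ∈ s, u k‖ ≤ (∑ k ∈ s, ‖u k‖) ^ 2 := by
  induction s using Finset.cons_induction with
  | empty => simp
  | cons a s ha ih =>
    rw [prod_cons, sum_cons, sum_cons]
    have hu' : ∀ k ∈ s, ‖1 + u k‖ ≤ 1 := fun k hk => hu k (mem_cons_of_mem hk)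
    have hfirst := norm_prod_one_add_sub_one_le s u hu'
    calc ‖(1 + u a) * ∏ k ∈ s, (1 + u k) - 1 - (u a + ∑ k ∈ s, u k)‖
        = ‖(∏ k ∈ s, (1 + u k) - 1 - ∑ k ∈ s, u k) + u a * (∏ k ∈ s, (1 + u k) - 1)‖ := by
          ring_nf
      _ ≤ (∑ k ∈ s, ‖u k‖) ^ 2 + ‖u a‖ * ∑ k ∈ s, ‖u k‖ :=
          (norm_add_le _ _).trans (add_le_add (ih hu') ((norm_mul_le _ _).trans (by gcongr)))
      _ ≤ (‖u a‖ + ∑ k ∈ s, ‖u k‖) ^ 2 := by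
          nlinarith [norm_nonneg (u a), sum_nonneg fun k (_ : k ∈ s) => norm_nonneg (u k)]

end ProdOneAdd

lemma IsGaussHermite.abs_radExp_sub_smolyak_two_cos_add_sum_le
    {node weight : (n : ℕ) → Fin n → ℝ} (hGH : IsGaussHermite node weight) {N : ℕ} (a : ℝ)
    (b : Fin N → ℝ) :
    |radExp N (fun y => Real.cos (a + ∑ j, b j * y j)) -
        smolyak node weight 2 N (fun y => Real.cos (a + ∑ j, b j * y j))| ≤
      (∑ k, b k ^ 2 / 2) ^ 2 := by
  set u : Fin N → ℝ := fun k => Real.cos (b k) - 1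
  have hu : ∀ k ∈ univ, ‖1 + u k‖ ≤ 1 := fun k _ => by
    simpa [u] using Real.abs_cos_le_one (b k)
  have hu_le (k : Fin N) : ‖u k‖ ≤ b k ^ 2 / 2 := by
    rw [Real.norm_eq_abs, abs_of_nonpos (by simpa [u] using Real.cos_le_one (b k))]
    linarith [Real.one_sub_sq_div_two_le_cos (x := b k)]
  rw [radExp_cos_add_sum, hGH.smolyak_two_cos_add_sum]
  calc |Real.cos a * ∏ k, Real.cos (b k) - Real.cos a * (1 + ∑ k, u k)|
      = |Real.cos a| * ‖∏ k, (1 + u k) - 1 - ∑ k, u k‖ := by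
        rw [Real.norm_eq_abs, ← abs_mul]
        simp only [u, add_sub_cancel]
        ring_nf
    _ ≤ 1 * (∑ k, ‖u k‖) ^ 2 :=
        mul_le_mul (Real.abs_cos_le_one a) (norm_prod_one_add_sub_one_sub_sum_le _ u hu)
          (norm_nonneg _) zero_le_one
    _ ≤ (∑ k, b k ^ 2 / 2) ^ 2 := by
        rw [one_mul]
        gcongr with k
        exact hu_le k

lemma sq_one_add_pow_le_one_add_exp {x : ℝ} (hx : 0 ≤ 1 + x) {m n : ℕ} (hmn : m ≤ n) :
    ((1 + x) ^ m) ^ 2 ≤ 1 + Real.exp (2 * n * x) := by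
  calc ((1 + x) ^ m) ^ 2
      ≤ (Real.exp x ^ m) ^ 2 := by gcongr; linarith [Real.add_one_le_exp x]
    _ = Real.exp (2 * m * x) := by rw [← Real.exp_nat_mul, sq, ← Real.exp_add]; ring_nf
    _ ≤ 1 + Real.exp (2 * n * x) := by
      have hmn' : (m : ℝ) ≤ n := by exact_mod_cast hmn
      rcases le_total 0 x with hx0 | hx0
      · have : Real.exp (2 * m * x) ≤ Real.exp (2 * n * x) := Real.exp_le_exp.2 (by gcongr)
        linarith
      · have : Real.exp (2 * m * x) ≤ 1 := Real.exp_le_one_iff.2 (by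
          nlinarith [(Nat.cast_nonneg m : (0 : ℝ) ≤ m)])
        linarith [Real.exp_pos (2 * n * x)]

lemma sum_sq_eulerCoeff_le (lam eps : ℝ) {T : ℝ} (hT : 0 ≤ T) {N : ℕ} (hN : N ≠ 0)
    (hstable : 0 ≤ 1 + lam * (T / N)) :
    ∑ j : Fin N, ((1 + lam * (T / N)) ^ (N - ((j : ℕ) + 1)) * eps * Real.sqrt (T / N)) ^ 2 ≤
      eps ^ 2 * T * (1 + Real.exp (2 * T * lam)) := by
  set h := T / N with hh
  have hNh : (N : ℝ) * h = T := by rw [hh]; field_simp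
  calc ∑ j : Fin N, ((1 + lam * h) ^ (N - ((j : ℕ) + 1)) * eps * Real.sqrt h) ^ 2
      = ∑ j : Fin N, ((1 + lam * h) ^ (N - ((j : ℕ) + 1))) ^ 2 * (eps ^ 2 * h) :=
        sum_congr rfl fun j _ => by rw [mul_pow, mul_pow, Real.sq_sqrt (by positivity)]; ring
    _ ≤ ∑ _j : Fin N, (1 + Real.exp (2 * N * (lam * h))) * (eps ^ 2 * h) :=
        sum_le_sum fun j _ => by
          gcongr
          exact sq_one_add_pow_le_one_add_exp hstable (Nat.sub_le _ _)
    _ = eps ^ 2 * T * (1 + Real.exp (2 * T * lam)) := by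
        rw [sum_const, card_univ, Fintype.card_fin, nsmul_eq_mul, ← hNh]
        ring_nf

/-- there exist `C > 0` and `h₀ > 0`, independent of `ε` and `h`, such that for
`φ(y) = cos(X̄(N;y))` and all `h = T/N ≤ h₀`,
`|E[cos X̄(N;ζ)] - A(2,N)φ| ≤ C ε⁴ (1 + e^{4Tλ})`. -/
theorem smolyak_cos_bound (node weight : (n : ℕ) → Fin n → ℝ)
    (hGH : IsGaussHermite node weight) (lam T : ℝ) (hT : 0 < T) :
    ∃ C > (0 : ℝ), ∃ h₀ > (0 : ℝ), ∀ eps : ℝ, ∀ N : ℕ, 1 ≤ N → T / N ≤ h₀ →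
      |radExp N (fun s => Real.cos (eulerX lam eps (T / N) N s)) -
          smolyak node weight 2 N (fun y => Real.cos (eulerX lam eps (T / N) N y))| ≤
        C * eps ^ 4 * (1 + Real.exp (4 * T * lam)) := by
  refine ⟨T ^ 2 / 2, by positivity, 1 / (1 + |lam|), by positivity, fun eps N hN hh₀ => ?_⟩
  have hstable : 0 ≤ 1 + lam * (T / N) := by
    have hh : 0 ≤ T / N := by positivity
    have : |lam| * (T / N) ≤ 1 :=
      calc |lam| * (T / N) ≤ |lam| * (1 / (1 + |lam|)) := by gcongr
        _ ≤ 1 := by rw [mul_one_div, div_le_one (by positivity)]; linarith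
    nlinarith [neg_abs_le lam]
  have hexp : Real.exp (4 * T * lam) = Real.exp (2 * T * lam) ^ 2 := by
    rw [sq, ← Real.exp_add]; ring_nf
  calc _ ≤ (∑ j : Fin N,
          ((1 + lam * (T / N)) ^ (N - ((j : ℕ) + 1)) * eps * Real.sqrt (T / N)) ^ 2 / 2) ^ 2 :=
        hGH.abs_radExp_sub_smolyak_two_cos_add_sum_le _ _
    _ ≤ (eps ^ 2 * T * (1 + Real.exp (2 * T * lam)) / 2) ^ 2 := by
        rw [← sum_div]
        gcongr
        exact sum_sq_eulerCoeff_le lam eps hT.le (by omega) hstable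
    _ ≤ T ^ 2 / 2 * eps ^ 4 * (1 + Real.exp (4 * T * lam)) := by
        rw [hexp]
        nlinarith [mul_nonneg (by positivity : (0 : ℝ) ≤ eps ^ 4 * T ^ 2)
          (sq_nonneg (1 - Real.exp (2 * T * lam)))]
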